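/- arXiv:1512.05088 — 3 statements merged into one kernel-verified Lean document; each statement's English description precedes it below -/
import Mathlib

section
/- Let $n$ be a positive integer, $P_1, P_2 > 0$, and let $P_{1k}, P_{2k} \geq 0$ and $\rho_k \in [-1,1]$ for $k=1,\ldots,n$ satisfy $\sum_{k=1}^n P_{1k} \leq nP_1$ and $\sum_{k=1}^n P_{2k} \leq nP_2$. Define $\rho := \frac{\sum_{k=1}^n \rho_k\sqrt{P_{1k}P_{2k}}}{n\sqrt{P_1P_2}}$. Then $\sum_{k=1}^n P_{1k}(1-\rho_k^2) \leq nP_1(1-\rho^2)$. -/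
open Finset

theorem stmt_1 (n : ℕ) (hn : 0 < n) (P1 P2 : ℝ) (hP1 : 0 < P1) (hP2 : 0 < P2)
    (P1k P2k ρk : Fin n → ℝ)
    (hP1k : ∀ k, 0 ≤ P1k k) (hP2k : ∀ k, 0 ≤ P2k k)
    (hρk : ∀ k, ρk k ∈ Set.Icc (-1 : ℝ) 1)
    (hsum1 : ∑ k, P1k k ≤ n * P1) (hsum2 : ∑ k, P2k k ≤ n * P2)
    (ρ : ℝ)
    (hρ : ρ = (∑ k, ρk k * Real.sqrt (P1k k * P2k k)) / (n * Real.sqrt (P1 * P2))) :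
    ∑ k, P1k k * (1 - ρk k ^ 2) ≤ n * P1 * (1 - ρ ^ 2) := by
  set S := ∑ k, ρk k * Real.sqrt (P1k k * P2k k) with hS
  set A := ∑ k, P1k k * ρk k ^ 2 with hA
  have hA0 : 0 ≤ A := Finset.sum_nonneg fun k _ =>
    mul_nonneg (hP1k k) (sq_nonneg _)
  have hcs : S ^ 2 ≤ A * (∑ k, P2k k) := by
    have := Finset.sum_mul_sq_le_sq_mul_sq Finset.univ
      (fun k => ρk k * Real.sqrt (P1k k)) (fun k => Real.sqrt (P2k k))
    calc S ^ 2 = (∑ k, (ρk k * Real.sqrt (P1k k)) * Real.sqrt (P2k k)) ^ 2 := by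
          congr 1; apply Finset.sum_congr rfl; intro k _
          rw [Real.sqrt_mul (hP1k k)]; ring
      _ ≤ (∑ k, (ρk k * Real.sqrt (P1k k)) ^ 2) * ∑ k, Real.sqrt (P2k k) ^ 2 := this
      _ = A * ∑ k, P2k k := by
          congr 1
          · apply Finset.sum_congr rfl; intro k _
            rw [mul_pow, Real.sq_sqrt (hP1k k)]; ring
          · apply Finset.sum_congr rfl; intro k _
            exact Real.sq_sqrt (hP2k k)
  have hcs2 : S ^ 2 ≤ A * (n * P2) := hcs.trans (by nlinarith)
  have hn' : (0:ℝ) < n := by exact_mod_cast hn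
  have hkey : n * P1 * ρ ^ 2 ≤ A := by
    have hsq : Real.sqrt (P1 * P2) ^ 2 = P1 * P2 :=
      Real.sq_sqrt (le_of_lt (mul_pos hP1 hP2))
    have hden : (0:ℝ) < n * Real.sqrt (P1 * P2) :=
      mul_pos hn' (Real.sqrt_pos.mpr (mul_pos hP1 hP2))
    rw [hρ, div_pow, mul_pow, hsq]
    have heq : (n:ℝ) * P1 * (S ^ 2 / ((n:ℝ) ^ 2 * (P1 * P2))) = S ^ 2 / ((n:ℝ) * P2) := by
      field_simp
    rw [heq, div_le_iff₀ (mul_pos hn' hP2)]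
    linarith
  have hexp : ∑ k, P1k k * (1 - ρk k ^ 2) = (∑ k, P1k k) - A := by
    rw [hA, ← Finset.sum_sub_distrib]
    apply Finset.sum_congr rfl; intro k _; ring
  rw [hexp]
  nlinarith
end

section
/- Let $P$ and $Q$ be probability measures on a measurable space $\mathcal{X}$, let $\alpha \in (0,1]$, and define $\beta_\alpha(P,Q) := \inf\{\int \pi \, dQ : \pi : \mathcal{X} \to [0,1] \text{ measurable}, \int \pi\, dP \geq \alpha\}$. Then for any $\eta > 0$, $\beta_\alpha(P,Q) \geq \frac{1}{\eta}\Big(\alpha - P\Big[\frac{dP}{dQ} \geq \eta\Big]\Big)$, where $\frac{dP}{dQ}$ is the Radon–Nikodym derivative (assume $P \ll Q$). -/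
open MeasureTheory
open scoped ENNReal

/-- The minimum type-II error probability of a randomized test between `P` and `Q`
with type-I success probability at least `α`. -/
noncomputable def betaAlpha {𝒳 : Type*} [MeasurableSpace 𝒳] (α : ℝ) (P Q : Measure 𝒳) : ℝ :=
  sInf {r : ℝ | ∃ π : 𝒳 → ℝ, Measurable π ∧ (∀ x, π x ∈ Set.Icc (0 : ℝ) 1) ∧
    α ≤ ∫ x, π x ∂P ∧ r = ∫ x, π x ∂Q}

theorem stmt_14 {𝒳 : Type*} [MeasurableSpace 𝒳] (P Q : Measure 𝒳)
    [IsProbabilityMeasure P] [IsProbabilityMeasure Q] (hPQ : P ≪ Q)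
    (α : ℝ) (hα : α ∈ Set.Ioc (0 : ℝ) 1) (η : ℝ) (hη : 0 < η) :
    (1 / η) * (α - (P {x | ENNReal.ofReal η ≤ P.rnDeriv Q x}).toReal)
      ≤ betaAlpha α P Q := by
  have hne : {r : ℝ | ∃ π : 𝒳 → ℝ, Measurable π ∧ (∀ x, π x ∈ Set.Icc (0 : ℝ) 1) ∧
      α ≤ ∫ x, π x ∂P ∧ r = ∫ x, π x ∂Q}.Nonempty := by
    refine ⟨1, fun _ => 1, measurable_const, fun x => ⟨zero_le_one, le_refl 1⟩, ?_, ?_⟩ <;>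
      simp [hα.2]
  refine le_csInf hne ?_
  rintro r ⟨π, hmeas, hbd, hαπ, rfl⟩
  set A : Set 𝒳 := {x | P.rnDeriv Q x < ENNReal.ofReal η} with hA
  have hAmeas : MeasurableSet A := measurableSet_lt (P.measurable_rnDeriv Q) measurable_const
  have hAc : Aᶜ = {x | ENNReal.ofReal η ≤ P.rnDeriv Q x} := by
    ext x; simp [hA, not_lt]
  set g : 𝒳 → ℝ≥0∞ := fun x => ENNReal.ofReal (π x) with hg
  have hgmeas : Measurable g := hmeas.ennreal_ofReal
  have hg1 : ∀ x, g x ≤ 1 := fun x => by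
    simpa using ENNReal.ofReal_le_of_le_toReal (by simpa using (hbd x).2)
  -- real integrals as lintegrals
  have hIP : ∫ x, π x ∂P = (∫⁻ x, g x ∂P).toReal := by
    rw [integral_eq_lintegral_of_nonneg_ae (Filter.Eventually.of_forall fun x => (hbd x).1)
      hmeas.aestronglyMeasurable]
  have hIQ : ∫ x, π x ∂Q = (∫⁻ x, g x ∂Q).toReal := by
    rw [integral_eq_lintegral_of_nonneg_ae (Filter.Eventually.of_forall fun x => (hbd x).1)
      hmeas.aestronglyMeasurable]
  have hgQ_le : ∫⁻ x, g x ∂Q ≤ 1 := by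
    calc ∫⁻ x, g x ∂Q ≤ ∫⁻ _, 1 ∂Q := lintegral_mono hg1
    _ = 1 := by simp
  have hgP_le : ∫⁻ x, g x ∂P ≤ 1 := by
    calc ∫⁻ x, g x ∂P ≤ ∫⁻ _, 1 ∂P := lintegral_mono hg1
    _ = 1 := by simp
  -- key lintegral inequality
  have hsplit : ∫⁻ x, g x ∂P = ∫⁻ x in A, g x ∂P + ∫⁻ x in Aᶜ, g x ∂P :=
    (lintegral_add_compl _ hAmeas).symm
  have hAc_le : ∫⁻ x in Aᶜ, g x ∂P ≤ P Aᶜ := by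
    calc ∫⁻ x in Aᶜ, g x ∂P ≤ ∫⁻ _ in Aᶜ, 1 ∂P := lintegral_mono hg1
    _ = P Aᶜ := by simp
  have hA_le : ∫⁻ x in A, g x ∂P ≤ ENNReal.ofReal η * ∫⁻ x, g x ∂Q := by
    rw [← setLIntegral_rnDeriv_mul hPQ hgmeas.aemeasurable hAmeas]
    calc ∫⁻ x in A, P.rnDeriv Q x * g x ∂Q
        ≤ ∫⁻ x in A, ENNReal.ofReal η * g x ∂Q := by
          refine setLIntegral_mono (measurable_const.mul hgmeas) fun x hx => ?_
          exact mul_le_mul_left (le_of_lt hx) _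
      _ = ENNReal.ofReal η * ∫⁻ x in A, g x ∂Q := by
          rw [lintegral_const_mul _ hgmeas]
      _ ≤ ENNReal.ofReal η * ∫⁻ x, g x ∂Q :=
          mul_le_mul_right (setLIntegral_le_lintegral _ _) _
  have hkey : ∫⁻ x, g x ∂P ≤ ENNReal.ofReal η * ∫⁻ x, g x ∂Q + P Aᶜ := by
    rw [hsplit]; exact add_le_add hA_le hAc_le
  -- pass to reals
  have hQfin : ∫⁻ x, g x ∂Q ≠ ⊤ := (lt_of_le_of_lt hgQ_le ENNReal.one_lt_top).ne
  have hPAcfin : P Aᶜ ≠ ⊤ := measure_ne_top _ _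
  have hrhsfin : ENNReal.ofReal η * ∫⁻ x, g x ∂Q + P Aᶜ ≠ ⊤ := by
    exact ENNReal.add_ne_top.mpr ⟨ENNReal.mul_ne_top ENNReal.ofReal_ne_top hQfin, hPAcfin⟩
  have hreal : (∫⁻ x, g x ∂P).toReal ≤ η * (∫⁻ x, g x ∂Q).toReal + (P Aᶜ).toReal := by
    have := ENNReal.toReal_mono hrhsfin hkey
    rwa [ENNReal.toReal_add (ENNReal.mul_ne_top ENNReal.ofReal_ne_top hQfin) hPAcfin,
      ENNReal.toReal_mul, ENNReal.toReal_ofReal hη.le] at this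
  have hα' : α ≤ η * ∫ x, π x ∂Q + (P {x | ENNReal.ofReal η ≤ P.rnDeriv Q x}).toReal := by
    rw [← hAc, hIQ]
    calc α ≤ ∫ x, π x ∂P := hαπ
    _ = (∫⁻ x, g x ∂P).toReal := hIP
    _ ≤ _ := hreal
  rw [one_div, inv_mul_le_iff₀ hη]
  linarith
end

section
/- Let $W$ be a random message uniform on a set of size $M$, let $P_{WY}$ be the joint distribution of the message and channel output induced by a code, and let $\hat{W} = \phi(Y)$ satisfy $\Pr(\hat{W} \neq W) \leq \varepsilon$ with $\varepsilon \in (0,1)$. Then for any probability measure $Q_Y$ on the output space and any $\gamma > 0$: $\ln M \leq \ln \gamma - \ln^+\Big(1 - \varepsilon - \Pr\Big[\ln\frac{dP_{Y|W}(Y|W)}{dQ_Y(Y)} \geq \ln\gamma\Big]\Big)$, where $\ln^+(x) = \ln x$ for $x > 0$ and $-\infty$ otherwise. -/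
open MeasureTheory ProbabilityTheory Finset

theorem stmt_16 {𝒴 : Type*} [MeasurableSpace 𝒴] (M : ℕ) (hM : 0 < M)
    (κ : Kernel (Fin M) 𝒴) [IsMarkovKernel κ]
    (φ : 𝒴 → Fin M) (hφ : Measurable φ)
    (ε : ℝ) (hε : ε ∈ Set.Ioo (0 : ℝ) 1)
    (herr : (1 / M : ℝ) * ∑ w, ((κ w) {y | φ y ≠ w}).toReal ≤ ε)
    (Q : Measure 𝒴) [IsProbabilityMeasure Q] (hac : ∀ w, κ w ≪ Q)
    (γ : ℝ) (hγ : 0 < γ) (p : ℝ)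
    (hp : p = (1 / M : ℝ) * ∑ w, ((κ w) {y | ENNReal.ofReal γ ≤ (κ w).rnDeriv Q y}).toReal)
    (hpos : 0 < 1 - ε - p) :
    Real.log M ≤ Real.log γ - Real.log (1 - ε - p) := by
  have hMR : (0:ℝ) < M := Nat.cast_pos.mpr hM
  set A : Fin M → Set 𝒴 := fun w => {y | ENNReal.ofReal γ ≤ (κ w).rnDeriv Q y} with hA
  have hAm : ∀ w, MeasurableSet (A w) := fun w =>
    measurableSet_le measurable_const (Measure.measurable_rnDeriv _ _)
  have hSm : ∀ w : Fin M, MeasurableSet {y | φ y = w} := fun w => hφ (measurableSet_singleton w)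
  have key : ∀ w : Fin M, ((κ w) {y | φ y = w}).toReal ≤
      ((κ w) (A w)).toReal + γ * (Q {y | φ y = w}).toReal := by
    intro w
    have h1 : (κ w) ({y | φ y = w} \ A w) ≤ ENNReal.ofReal γ * Q {y | φ y = w} := by
      have hwd : Q.withDensity ((κ w).rnDeriv Q) = κ w :=
        Measure.withDensity_rnDeriv_eq _ _ (hac w)
      have hms : MeasurableSet ({y | φ y = w} \ A w) := (hSm w).diff (hAm w)
      calc (κ w) ({y | φ y = w} \ A w)
          = ∫⁻ y in {y | φ y = w} \ A w, (κ w).rnDeriv Q y ∂Q := by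
            conv_lhs => rw [← hwd]
            exact withDensity_apply _ hms
        _ ≤ ∫⁻ _ in {y | φ y = w} \ A w, ENNReal.ofReal γ ∂Q := by
            refine setLIntegral_mono measurable_const ?_
            intro y hy
            exact le_of_lt (lt_of_not_ge hy.2)
        _ = ENNReal.ofReal γ * Q ({y | φ y = w} \ A w) := by
            rw [setLIntegral_const, mul_comm]
        _ ≤ ENNReal.ofReal γ * Q {y | φ y = w} := by
            gcongr
            exact Set.diff_subset
    have h2 : (κ w) {y | φ y = w} ≤ (κ w) (A w) + ENNReal.ofReal γ * Q {y | φ y = w} := by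
      calc (κ w) {y | φ y = w} ≤ (κ w) (A w ∪ ({y | φ y = w} \ A w)) :=
            measure_mono (fun y hy => by by_cases h : y ∈ A w <;> simp [h, hy])
        _ ≤ (κ w) (A w) + (κ w) ({y | φ y = w} \ A w) := measure_union_le _ _
        _ ≤ _ := by gcongr
    have hfin1 : (κ w) (A w) ≠ ⊤ := measure_ne_top _ _
    have hfin2 : ENNReal.ofReal γ * Q {y | φ y = w} ≠ ⊤ :=
      ENNReal.mul_ne_top ENNReal.ofReal_ne_top (measure_ne_top _ _)
    have h3 := ENNReal.toReal_mono (by finiteness) h2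
    rwa [ENNReal.toReal_add hfin1 hfin2, ENNReal.toReal_mul, ENNReal.toReal_ofReal hγ.le] at h3
  -- success probability
  have hsucc : ∀ w : Fin M, ((κ w) {y | φ y = w}).toReal = 1 - ((κ w) {y | φ y ≠ w}).toReal := by
    intro w
    have hc : {y | φ y = w} = {y | φ y ≠ w}ᶜ := by ext y; simp
    rw [hc, measure_compl (s := {y | φ y ≠ w}) ((hSm w).compl) (measure_ne_top _ _), measure_univ,
      ENNReal.toReal_sub_of_le prob_le_one ENNReal.one_ne_top, ENNReal.toReal_one]
  -- sum of Q fibers equals 1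
  have hQsum : ∑ w : Fin M, (Q {y | φ y = w}).toReal = 1 := by
    have : ∑ w : Fin M, Q (φ ⁻¹' {w}) = Q Set.univ := by
      rw [← measure_biUnion_finset ?_ (fun w _ => hφ (measurableSet_singleton w))]
      · congr 1
        ext y
        simp
      · intro a _ b _ hab
        refine Set.disjoint_left.mpr ?_
        intro y hy hy'
        exact hab (hy.symm.trans hy')
    have h1 : ∑ w : Fin M, (Q (φ ⁻¹' {w})).toReal = (Q Set.univ).toReal := by
      rw [← this, ENNReal.toReal_sum (fun w _ => measure_ne_top _ _)]
    simpa [Set.preimage, measure_univ] using h1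
  -- combine
  have hmain : 1 - ε ≤ p + γ / M := by
    have hL : 1 - ε ≤ (1 / M : ℝ) * ∑ w, ((κ w) {y | φ y = w}).toReal := by
      have : ∑ w : Fin M, ((κ w) {y | φ y = w}).toReal
          = M - ∑ w, ((κ w) {y | φ y ≠ w}).toReal := by
        simp [hsucc, Finset.sum_sub_distrib]
      rw [this, mul_sub]
      have : (1 / M : ℝ) * M = 1 := by field_simp
      nlinarith [herr]
    have hR : (1 / M : ℝ) * ∑ w, ((κ w) {y | φ y = w}).toReal ≤ p + γ / M := by
      have hle : ∑ w, ((κ w) {y | φ y = w}).toReal ≤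
          ∑ w, (((κ w) (A w)).toReal + γ * (Q {y | φ y = w}).toReal) :=
        Finset.sum_le_sum (fun w _ => key w)
      have heq : ∑ w, (((κ w) (A w)).toReal + γ * (Q {y | φ y = w}).toReal)
          = (∑ w, ((κ w) (A w)).toReal) + γ := by
        rw [Finset.sum_add_distrib, ← Finset.mul_sum, hQsum, mul_one]
      calc (1 / M : ℝ) * ∑ w, ((κ w) {y | φ y = w}).toReal
          ≤ (1 / M : ℝ) * ((∑ w, ((κ w) (A w)).toReal) + γ) := by
            rw [← heq]
            exact mul_le_mul_of_nonneg_left hle (by positivity)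
        _ = p + γ / M := by rw [hp]; ring
    linarith
  have hMle : (M : ℝ) * (1 - ε - p) ≤ γ := by
    have := mul_le_mul_of_nonneg_left hmain hMR.le
    have h2 : (M:ℝ) * (p + γ / M) = M * p + γ := by field_simp
    nlinarith
  have hlog : Real.log ((M : ℝ) * (1 - ε - p)) ≤ Real.log γ :=
    Real.log_le_log (by positivity) hMle
  rw [Real.log_mul (by positivity) (by positivity)] at hlog
  linarith
end
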